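/- arXiv:1910.02282 — 2 statements merged into one kernel-verified Lean document; each statement's English description precedes it below -/
import Mathlib

section
/- Let N_c, N_cs ≥ 1 count the bulk and surface species and N, N_s ≥ 1 be the numbers of bulk and surface degrees of freedom. For each t ∈ ℝ let M_Ω(t), B(t), K(t) ∈ ℝ^{N×N} and M_s(t), B_s(t), K_s(t) ∈ ℝ^{N_s×N_s}; for each p ∈ {1,…,N_c} let C^{(p)}, R^{(p)}, F^{(p)} : ℝ → ℝ^N with t ↦ M_Ω(t)C^{(p)}(t) differentiable, and for each q ∈ {1,…,N_cs} let C_s^{(q)}, R_s^{(q)}, F_s^{(q)} : ℝ → ℝ^{N_s} with t ↦ M_s(t)C_s^{(q)}(t) differentiable. Assume that for all t: (i) for each p the bulk semi-discrete system (d/dt)[M_Ω C^{(p)}] + (B + K)C^{(p)} − R^{(p)} = F^{(p)} holds (the boundary matrix A_Γ having vanished because the ALE velocity and material velocity of the curve have equal normal components); (ii) for each q the surface semi-discrete system (d/dt)[M_s C_s^{(q)}] + (K_s − B_s)C_s^{(q)} + R_s^{(q)} = F_s^{(q)} holds; (iii) the column sums of B(t), K(t), B_s(t), K_s(t) all vanish;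 (iv) ∑_{p=1}^{N_c} e^T R^{(p)}(t) = ∑_{q=1}^{N_cs} e_s^T R_s^{(q)}(t); (v) ∑_{p=1}^{N_c} e^T F^{(p)}(t) = 0 and ∑_{q=1}^{N_cs} e_s^T F_s^{(q)}(t) = 0. Then the total discrete mass is conserved: for every t, (d/dt)[ ∑_{p=1}^{N_c} e^T M_Ω(t) C^{(p)}(t) + ∑_{q=1}^{N_cs} e_s^T M_s(t) C_s^{(q)}(t) ] = 0. -/
/-!
Summing the semi-discrete equations over all degrees of freedom (i.e. testing with the
constant function `1`) kills the advection and stiffness terms, since their matrices have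
vanishing column sums. What remains says that the rate of change of the bulk mass is
`∑ F + ∑ R` and that of the surface mass is `∑ Fs - ∑ Rs`; the loads sum to zero and the
coupling terms cancel, so the total mass has zero derivative.
-/

open Finset Matrix

section ColumnSums

variable {m n α : Type*} [Fintype m] [Fintype n]

theorem Matrix.sum_mulVec_eq_zero [NonUnitalNonAssocSemiring α] (A : Matrix m n α)
    (hA : ∀ μ, ∑ ν, A ν μ = 0) (v : n → α) : ∑ ν, (A *ᵥ v) ν = 0 := by
  simp only [mulVec, dotProduct]
  rw [Finset.sum_comm]
  simp [← Finset.sum_mul, hA]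

variable [NonUnitalNonAssocRing α] (A : Matrix m n α) (hA : ∀ μ, ∑ ν, A ν μ = 0)
  {d r f : m → α} {c : n → α}
include hA

theorem Matrix.sum_eq_sum_add_sum_of_add_mulVec_sub_eq (h : d + A *ᵥ c - r = f) :
    ∑ ν, d ν = ∑ ν, f ν + ∑ ν, r ν := by
  simp only [← h, Pi.add_apply, Pi.sub_apply, sum_add_distrib, sum_sub_distrib,
    A.sum_mulVec_eq_zero hA]
  abel

theorem Matrix.sum_eq_sum_sub_sum_of_add_mulVec_add_eq (h : d + A *ᵥ c + r = f) :
    ∑ ν, d ν = ∑ ν, f ν - ∑ ν, r ν := by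
  simp only [← h, Pi.add_apply, sum_add_distrib, A.sum_mulVec_eq_zero hA]
  abel

end ColumnSums

theorem DifferentiableAt.hasDerivAt_sum_apply {𝕜 F ι : Type*} [NontriviallyNormedField 𝕜]
    [NormedAddCommGroup F] [NormedSpace 𝕜 F] [Fintype ι] {f : 𝕜 → ι → F} {x : 𝕜}
    (hf : DifferentiableAt 𝕜 f x) :
    HasDerivAt (fun x => ∑ i, f x i) (∑ i, deriv f x i) x :=
  HasDerivAt.fun_sum fun i _ => hasDerivAt_pi.mp hf.hasDerivAt i

theorem semidiscrete_global_conservation_general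
    (Nc Ncs N Ns : ℕ)
    (MΩ B K : ℝ → Matrix (Fin N) (Fin N) ℝ)
    (Ms Bs Ks : ℝ → Matrix (Fin Ns) (Fin Ns) ℝ)
    (C R F : Fin Nc → ℝ → Fin N → ℝ)
    (Cs Rs Fs : Fin Ncs → ℝ → Fin Ns → ℝ)
    (hdiffb : ∀ p, Differentiable ℝ (fun t => (MΩ t).mulVec (C p t)))
    (hdiffs : ∀ q, Differentiable ℝ (fun t => (Ms t).mulVec (Cs q t)))
    (hbulk : ∀ p t, deriv (fun t => (MΩ t).mulVec (C p t)) t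
      + (B t + K t).mulVec (C p t) - R p t = F p t)
    (hsurf : ∀ q t, deriv (fun t => (Ms t).mulVec (Cs q t)) t
      + (Ks t - Bs t).mulVec (Cs q t) + Rs q t = Fs q t)
    (hB : ∀ t μ, (∑ ν, B t ν μ) = 0)
    (hK : ∀ t μ, (∑ ν, K t ν μ) = 0)
    (hBs : ∀ t μ, (∑ ν, Bs t ν μ) = 0)
    (hKs : ∀ t μ, (∑ ν, Ks t ν μ) = 0)
    (hR : ∀ t, (∑ p, ∑ ν, R p t ν) = ∑ q, ∑ ν, Rs q t ν)
    (hF : ∀ t, (∑ p, ∑ ν, F p t ν) = 0)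
    (hFs : ∀ t, (∑ q, ∑ ν, Fs q t ν) = 0)
    (t : ℝ) :
    deriv (fun t => (∑ p, ∑ ν, (MΩ t).mulVec (C p t) ν)
      + ∑ q, ∑ ν, (Ms t).mulVec (Cs q t) ν) t = 0 := by
  have hBK : ∀ μ, ∑ ν, (B t + K t) ν μ = 0 := fun μ => by
    simp only [Matrix.add_apply, sum_add_distrib, hB t μ, hK t μ, add_zero]
  have hKBs : ∀ μ, ∑ ν, (Ks t - Bs t) ν μ = 0 := fun μ => by
    simp only [Matrix.sub_apply, sum_sub_distrib, hKs t μ, hBs t μ, sub_zero]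
  have bulk_rate := fun p => (B t + K t).sum_eq_sum_add_sum_of_add_mulVec_sub_eq hBK (hbulk p t)
  have surface_rate :=
    fun q => (Ks t - Bs t).sum_eq_sum_sub_sum_of_add_mulVec_add_eq hKBs (hsurf q t)
  have bulk_mass := HasDerivAt.fun_sum (u := univ) fun p _ => (hdiffb p t).hasDerivAt_sum_apply
  have surface_mass := HasDerivAt.fun_sum (u := univ) fun q _ => (hdiffs q t).hasDerivAt_sum_apply
  rw [(bulk_mass.fun_add surface_mass).deriv]
  simp only [bulk_rate, surface_rate, sum_add_distrib, sum_sub_distrib, hF t, hFs t, hR t]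
  ring

/-- Global conservation for the semi-discrete bulk-surface ALE finite element
system, independently of the ALE velocity. -/
theorem semidiscrete_global_conservation
    (Nc Ncs N Ns : ℕ) (hNc : 1 ≤ Nc) (hNcs : 1 ≤ Ncs) (hN : 1 ≤ N) (hNs : 1 ≤ Ns)
    (MΩ B K : ℝ → Matrix (Fin N) (Fin N) ℝ)
    (Ms Bs Ks : ℝ → Matrix (Fin Ns) (Fin Ns) ℝ)
    (C R F : Fin Nc → ℝ → Fin N → ℝ)
    (Cs Rs Fs : Fin Ncs → ℝ → Fin Ns → ℝ)
    (hdiffb : ∀ p, Differentiable ℝ (fun t => (MΩ t).mulVec (C p t)))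
    (hdiffs : ∀ q, Differentiable ℝ (fun t => (Ms t).mulVec (Cs q t)))
    (hbulk : ∀ p t, deriv (fun t => (MΩ t).mulVec (C p t)) t
      + (B t + K t).mulVec (C p t) - R p t = F p t)
    (hsurf : ∀ q t, deriv (fun t => (Ms t).mulVec (Cs q t)) t
      + (Ks t - Bs t).mulVec (Cs q t) + Rs q t = Fs q t)
    (hB : ∀ t μ, (∑ ν, B t ν μ) = 0)
    (hK : ∀ t μ, (∑ ν, K t ν μ) = 0)
    (hBs : ∀ t μ, (∑ ν, Bs t ν μ) = 0)
    (hKs : ∀ t μ, (∑ ν, Ks t ν μ) = 0)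
    (hR : ∀ t, (∑ p, ∑ ν, R p t ν) = ∑ q, ∑ ν, Rs q t ν)
    (hF : ∀ t, (∑ p, ∑ ν, F p t ν) = 0)
    (hFs : ∀ t, (∑ q, ∑ ν, Fs q t ν) = 0)
    (t : ℝ) :
    deriv (fun t => (∑ p, ∑ ν, (MΩ t).mulVec (C p t) ν)
      + ∑ q, ∑ ν, (Ms t).mulVec (Cs q t) ν) t = 0 :=
  semidiscrete_global_conservation_general Nc Ncs N Ns MΩ B K Ms Bs Ks C R F Cs Rs Fs hdiffb hdiffs
    hbulk hsurf hB hK hBs hKs hR hF hFs t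
end

section
/- Let N_c, N_cs ≥ 1 count the bulk and surface species, N, N_s ≥ 1 be the numbers of bulk and surface degrees of freedom, and Δt ∈ ℝ. Let M, B, K, M', B', K' ∈ ℝ^{N×N} be bulk matrices at time levels n and n+1, and M_s, B_s, K_s, M_s', B_s', K_s' ∈ ℝ^{N_s×N_s} be surface matrices at time levels n and n+1. For each p ∈ {1,…,N_c} let C^{(p)}, C'^{(p)}, R^{(p)}, R'^{(p)}, F^{(p)}, F'^{(p)} ∈ ℝ^N, and for each q ∈ {1,…,N_cs} let C_s^{(q)}, C̃_s^{(q)}, C_s'^{(q)}, R_s^{(q)}, R_s'^{(q)}, F_s^{(q)}, F_s'^{(q)} ∈ ℝ^{N_s}. Assume: (i) predictor step: for each q, (M_s' + Δt(K_s' − B_s')) C̃_s^{(q)} = M_s C_s^{(q)} − Δt (R_s^{(q)} − F_s^{(q)}); (ii) Crank–Nicolson bulk step: for each p, (M' + (Δt/2)(B' + K')) C'^{(p)} = (M − (Δt/2)(B + K)) C^{(p)} + (Δt/2)(R'^{(p)} + R^{(p)}) + (Δt/2)(F'^{(p)} + F^{(p)}); (iii) corrector step: for each q, (M_s' + (Δt/2)(K_s'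 − B_s')) C_s'^{(q)} = (M_s − (Δt/2)(K_s − B_s)) C_s^{(q)} + (Δt/2)(F_s'^{(q)} + F_s^{(q)}) − (Δt/2)(R_s'^{(q)} + R_s^{(q)}); (iv) the column sums of B, K, B', K', B_s, K_s, B_s', K_s' all vanish; (v) ∑_{p=1}^{N_c} e^T R^{(p)} = ∑_{q=1}^{N_cs} e_s^T R_s^{(q)} and ∑_{p=1}^{N_c} e^T R'^{(p)} = ∑_{q=1}^{N_cs} e_s^T R_s'^{(q)}; (vi) ∑_{p=1}^{N_c} e^T F^{(p)} = 0, ∑_{p=1}^{N_c} e^T F'^{(p)} = 0, ∑_{q=1}^{N_cs} e_s^T F_s^{(q)} = 0 and ∑_{q=1}^{N_cs} e_s^T F_s'^{(q)} = 0. Then the total discrete mass is conserved over the time step: ∑_{p=1}^{N_c} e^T M' C'^{(p)} + ∑_{q=1}^{N_cs} e_s^T M_s' C_s'^{(q)} = ∑_{p=1}^{N_c} e^T M C^{(p)} + ∑_{q=1}^{N_cs} e_s^T M_s C_s^{(q)}, independently of the ALE velocity, the predicted solutions C̃_s^{(q)} and the time step size Δt. -/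
/-! Applying `eᵀ` to each step, the advection and stiffness matrices drop out because their
column sums vanish, so each species' mass changes only by `Δt/2` times its coupling and load
terms. Summed over species, the loads vanish and the bulk coupling cancels the surface one. -/

open Finset Matrix

theorem sum_mulVec_eq_zero_of_sum_col_eq_zero {m n R : Type*} [Fintype m] [Fintype n]
    [NonUnitalNonAssocSemiring R] (A : Matrix m n R) (v : n → R)
    (hA : ∀ j, ∑ i, A i j = 0) : ∑ i, (A *ᵥ v) i = 0 := by
  simp only [mulVec, dotProduct]
  rw [sum_comm]
  simp [← sum_mul, hA]

theorem sum_col_add_eq_zero {m n R : Type*} [Fintype m] [AddCommMonoid R]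
    {A B : Matrix m n R} (hA : ∀ j, ∑ i, A i j = 0) (hB : ∀ j, ∑ i, B i j = 0) (j : n) :
    ∑ i, (A + B) i j = 0 := by
  simp [sum_add_distrib, hA j, hB j]

theorem sum_col_sub_eq_zero {m n R : Type*} [Fintype m] [AddCommGroup R]
    {A B : Matrix m n R} (hA : ∀ j, ∑ i, A i j = 0) (hB : ∀ j, ∑ i, B i j = 0) (j : n) :
    ∑ i, (A - B) i j = 0 := by
  simp [sum_sub_distrib, hA j, hB j]

theorem sum_mulVec_eq_of_step {ι R : Type*} [Fintype ι] [CommRing R]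
    {M M' X X' : Matrix ι ι R} {c : R} {x x' g : ι → R}
    (hX : ∀ j, ∑ i, X i j = 0) (hX' : ∀ j, ∑ i, X' i j = 0)
    (h : (M' + c • X') *ᵥ x' = (M - c • X) *ᵥ x + g) :
    ∑ i, (M' *ᵥ x') i = ∑ i, (M *ᵥ x) i + ∑ i, g i := by
  have h := congrArg (fun v => ∑ i, v i) h
  simpa only [add_mulVec, sub_mulVec, smul_mulVec, Pi.add_apply, Pi.sub_apply, Pi.smul_apply,
    smul_eq_mul, sum_add_distrib, sum_sub_distrib, ← mul_sum,
    sum_mulVec_eq_zero_of_sum_col_eq_zero _ _ hX, sum_mulVec_eq_zero_of_sum_col_eq_zero _ _ hX',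
    mul_zero, add_zero, sub_zero] using h

theorem fully_discrete_global_conservation_general
    (Nc Ncs N Ns : ℕ)
    (Δt : ℝ)
    (M B K M' B' K' : Matrix (Fin N) (Fin N) ℝ)
    (Ms Bs Ks Ms' Bs' Ks' : Matrix (Fin Ns) (Fin Ns) ℝ)
    (C C' R R' F F' : Fin Nc → Fin N → ℝ)
    (Cs Cs' Rs Rs' Fs Fs' : Fin Ncs → Fin Ns → ℝ)
    (hbulk : ∀ p, (M' + (Δt / 2) • (B' + K')).mulVec (C' p)
      = (M - (Δt / 2) • (B + K)).mulVec (C p)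
        + (Δt / 2) • (R' p + R p) + (Δt / 2) • (F' p + F p))
    (hcorr : ∀ q, (Ms' + (Δt / 2) • (Ks' - Bs')).mulVec (Cs' q)
      = (Ms - (Δt / 2) • (Ks - Bs)).mulVec (Cs q)
        + (Δt / 2) • (Fs' q + Fs q) - (Δt / 2) • (Rs' q + Rs q))
    (hB : ∀ μ, (∑ ν, B ν μ) = 0) (hK : ∀ μ, (∑ ν, K ν μ) = 0)
    (hB' : ∀ μ, (∑ ν, B' ν μ) = 0) (hK' : ∀ μ, (∑ ν, K' ν μ) = 0)
    (hBs : ∀ μ, (∑ ν, Bs ν μ) = 0) (hKs : ∀ μ, (∑ ν, Ks ν μ) = 0)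
    (hBs' : ∀ μ, (∑ ν, Bs' ν μ) = 0) (hKs' : ∀ μ, (∑ ν, Ks' ν μ) = 0)
    (hR : (∑ p, ∑ ν, R p ν) = ∑ q, ∑ ν, Rs q ν)
    (hR' : (∑ p, ∑ ν, R' p ν) = ∑ q, ∑ ν, Rs' q ν)
    (hF : (∑ p, ∑ ν, F p ν) = 0) (hF' : (∑ p, ∑ ν, F' p ν) = 0)
    (hFs : (∑ q, ∑ ν, Fs q ν) = 0) (hFs' : (∑ q, ∑ ν, Fs' q ν) = 0) :
    (∑ p, ∑ ν, M'.mulVec (C' p) ν) + (∑ q, ∑ ν, Ms'.mulVec (Cs' q) ν)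
      = (∑ p, ∑ ν, M.mulVec (C p) ν) + (∑ q, ∑ ν, Ms.mulVec (Cs q) ν) := by
  have bulk p := sum_mulVec_eq_of_step (sum_col_add_eq_zero hB hK)
    (sum_col_add_eq_zero hB' hK') ((hbulk p).trans (add_assoc _ _ _))
  have surf q := sum_mulVec_eq_of_step (sum_col_sub_eq_zero hKs hBs)
    (sum_col_sub_eq_zero hKs' hBs') ((hcorr q).trans (add_sub_assoc _ _ _))
  simp only [Pi.add_apply, Pi.sub_apply, Pi.smul_apply, smul_eq_mul, ← mul_add, ← mul_sub,
    ← mul_sum, sum_add_distrib, sum_sub_distrib] at bulk surf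
  rw [sum_congr rfl fun p _ => bulk p, sum_congr rfl fun q _ => surf q]
  simp only [sum_add_distrib, sum_sub_distrib, ← mul_sum, hF, hF', hFs, hFs', hR, hR']
  ring

/-- Global conservation of the fully discrete two-stage modified Crank-Nicolson
ALE finite element scheme, independently of the ALE velocity, the predicted
solutions and the time step size. -/
theorem fully_discrete_global_conservation
    (Nc Ncs N Ns : ℕ) (hNc : 1 ≤ Nc) (hNcs : 1 ≤ Ncs) (hN : 1 ≤ N) (hNs : 1 ≤ Ns)
    (Δt : ℝ)
    (M B K M' B' K' : Matrix (Fin N) (Fin N) ℝ)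
    (Ms Bs Ks Ms' Bs' Ks' : Matrix (Fin Ns) (Fin Ns) ℝ)
    (C C' R R' F F' : Fin Nc → Fin N → ℝ)
    (Cs Cst Cs' Rs Rs' Fs Fs' : Fin Ncs → Fin Ns → ℝ)
    (hpred : ∀ q, (Ms' + Δt • (Ks' - Bs')).mulVec (Cst q)
      = Ms.mulVec (Cs q) - Δt • (Rs q - Fs q))
    (hbulk : ∀ p, (M' + (Δt / 2) • (B' + K')).mulVec (C' p)
      = (M - (Δt / 2) • (B + K)).mulVec (C p)
        + (Δt / 2) • (R' p + R p) + (Δt / 2) • (F' p + F p))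
    (hcorr : ∀ q, (Ms' + (Δt / 2) • (Ks' - Bs')).mulVec (Cs' q)
      = (Ms - (Δt / 2) • (Ks - Bs)).mulVec (Cs q)
        + (Δt / 2) • (Fs' q + Fs q) - (Δt / 2) • (Rs' q + Rs q))
    (hB : ∀ μ, (∑ ν, B ν μ) = 0) (hK : ∀ μ, (∑ ν, K ν μ) = 0)
    (hB' : ∀ μ, (∑ ν, B' ν μ) = 0) (hK' : ∀ μ, (∑ ν, K' ν μ) = 0)
    (hBs : ∀ μ, (∑ ν, Bs ν μ) = 0) (hKs : ∀ μ, (∑ ν, Ks ν μ) = 0)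
    (hBs' : ∀ μ, (∑ ν, Bs' ν μ) = 0) (hKs' : ∀ μ, (∑ ν, Ks' ν μ) = 0)
    (hR : (∑ p, ∑ ν, R p ν) = ∑ q, ∑ ν, Rs q ν)
    (hR' : (∑ p, ∑ ν, R' p ν) = ∑ q, ∑ ν, Rs' q ν)
    (hF : (∑ p, ∑ ν, F p ν) = 0) (hF' : (∑ p, ∑ ν, F' p ν) = 0)
    (hFs : (∑ q, ∑ ν, Fs q ν) = 0) (hFs' : (∑ q, ∑ ν, Fs' q ν) = 0) :
    (∑ p, ∑ ν, M'.mulVec (C' p) ν) + (∑ q, ∑ ν, Ms'.mulVec (Cs' q) ν)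
      = (∑ p, ∑ ν, M.mulVec (C p) ν) + (∑ q, ∑ ν, Ms.mulVec (Cs q) ν) :=
  fully_discrete_global_conservation_general Nc Ncs N Ns Δt M B K M' B' K' Ms Bs Ks Ms' Bs' Ks' C C'
    R R' F F' Cs Cs' Rs Rs' Fs Fs' hbulk hcorr hB hK hB' hK' hBs hKs hBs' hKs' hR hR' hF hF' hFs
    hFs'
end
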